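/- Let G be a group, p a prime and m ≥ 1. Let ρ, ρ' : G → GSp₄(ℤ/p^{m+1}ℤ) be group homomorphisms whose reductions modulo p^m coincide and which satisfy ν ∘ ρ = ν ∘ ρ'. Then there is a unique function h : G → sp₄(𝔽_p) such that ρ(σ) = (1 + p^m·h̃(σ))·ρ'(σ) for all σ ∈ G (h̃(σ) denoting any lift of h(σ)), and h is a 1-cocycle for the adjoint action of the mod-p reduction ρ̄ of ρ: h(στ) = h(σ) + ρ̄(σ)·h(τ)·ρ̄(σ)⁻¹ for all σ, τ ∈ G. -/

import Mathlib

/-!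
Since `m ≥ 1`, the ideal `p^m ℤ/p^{m+1}ℤ` squares to zero and `x ↦ p^m x̃` identifies `𝔽_p` with
it, so `p^m X` only depends on `X mod p`. As `ρ ≡ ρ' mod p^m`, one can write
`ρ(σ) ρ'(σ)⁻¹ = 1 + p^m h̃(σ)`, which determines `h(σ)`. Then
`ρ(στ) ρ'(στ)⁻¹ = (1 + p^m h̃(σ)) · ρ'(σ) (1 + p^m h̃(τ)) ρ'(σ)⁻¹` expands, without quadratic
term, to `1 + p^m (h̃(σ) + ρ'(σ) h̃(τ) ρ'(σ)⁻¹)`, and reducing mod `p` (where `ρ'` and `ρ` agree)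
gives the cocycle identity. Likewise, equal multipliers force
`(1 + p^m h̃)ᵀ J (1 + p^m h̃) = J`, whose first-order part says `h(σ) ∈ sp₄(𝔽_p)`.
-/

open Matrix

/-- The 4×4 matrix `J` given in 2×2 blocks by `[[0, I₂], [−I₂, 0]]`. -/
def Jmat (R : Type*) [CommRing R] : Matrix (Fin 4) (Fin 4) R :=
  !![0, 0, 1, 0; 0, 0, 0, 1; -1, 0, 0, 0; 0, -1, 0, 0]

section SquareZero

variable {R A : Type*} [CommRing R] [Ring A] [Algebra R A] {c : R}

theorem one_add_smul_mul_one_add_smul (hc : c * c = 0) (x y : A) :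
    (1 + c • x) * (1 + c • y) = 1 + c • (x + y) := by
  simp only [add_mul, mul_add, one_mul, mul_one, smul_mul_smul_comm, hc, zero_smul, smul_add]
  abel

theorem mul_one_add_smul_eq {a b : A} (hba : b * a = 1) (x : A) :
    a * (1 + c • x) = (1 + c • (a * x * b)) * a := by
  simp only [mul_add, add_mul, mul_one, one_mul, mul_smul_comm, smul_mul_assoc, mul_assoc, hba]

end SquareZero

theorem transpose_one_add_smul_mul_mul {n R : Type*} [Fintype n] [DecidableEq n] [CommRing R]
    {c : R} (hc : c * c = 0) (J X : Matrix n n R) :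
    (1 + c • X)ᵀ * J * (1 + c • X) = J + c • (Xᵀ * J + J * X) := by
  simp only [transpose_add, transpose_one, transpose_smul, add_mul, mul_add, one_mul, mul_one,
    smul_mul_assoc, mul_smul_comm, smul_smul, hc, zero_smul, smul_add]
  abel

theorem Jmat_map {R S : Type*} [CommRing R] [CommRing S] (f : R →+* S) :
    (Jmat R).map f = Jmat S := by
  ext i j
  fin_cases i <;> fin_cases j <;> simp [Jmat]

theorem ZMod.exists_eq_mul_of_castHom_eq_zero {d n : ℕ} [NeZero n] (h : d ∣ n) {x : ZMod n}
    (hx : castHom h (ZMod d) x = 0) : ∃ y : ZMod n, x = d * y := by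
  rw [← natCast_zmod_val x, map_natCast, natCast_eq_zero_iff] at hx
  obtain ⟨k, hk⟩ := hx
  exact ⟨k, by rw [← natCast_zmod_val x, hk, Nat.cast_mul]⟩

section PrimePowerLift

variable {p m : ℕ}

-- `𝔩 x` is the representative of `x : 𝔽_p` in `[0, p)`, i.e. the lift `h̃` of the statement.
local notation "𝔠" => (p : ZMod (p ^ (m + 1))) ^ m
local notation "π" => ZMod.castHom (dvd_pow_self p (Nat.succ_ne_zero m)) (ZMod p)
local notation "𝔩" => fun x : ZMod p => ((ZMod.val x : ℕ) : ZMod (p ^ (m + 1)))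

namespace ZMod

theorem pow_mul_pow_eq_zero (hm : 1 ≤ m) : 𝔠 * 𝔠 = 0 := by
  rw [← pow_add, ← Nat.cast_pow, natCast_eq_zero_iff]
  exact pow_dvd_pow p (by omega)

variable [NeZero p]

theorem castHom_natCast_val (a : ZMod p) : π (a.val : ZMod (p ^ (m + 1))) = a := by
  rw [map_natCast, natCast_zmod_val]

theorem pow_mul_eq_zero_iff (z : ZMod (p ^ (m + 1))) : 𝔠 * z = 0 ↔ π z = 0 := by
  have hdvd := Nat.mul_dvd_mul_iff_left (b := p) (c := z.val) (pow_pos (Nat.pos_of_neZero p) m)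
  rw [← pow_succ] at hdvd
  rw [← natCast_zmod_val z, map_natCast, ← Nat.cast_pow, ← Nat.cast_mul, natCast_eq_zero_iff,
    natCast_eq_zero_iff, hdvd]

theorem pow_mul_eq_pow_mul_iff (z w : ZMod (p ^ (m + 1))) : 𝔠 * z = 𝔠 * w ↔ π z = π w := by
  rw [← sub_eq_zero, ← mul_sub, pow_mul_eq_zero_iff, map_sub, sub_eq_zero]

variable {k l : Type*}

theorem pow_smul_eq_pow_smul_iff (X Y : Matrix k l (ZMod (p ^ (m + 1)))) :
    𝔠 • X = 𝔠 • Y ↔ X.map π = Y.map π := by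
  simp only [← Matrix.ext_iff, Matrix.smul_apply, map_apply, smul_eq_mul, pow_mul_eq_pow_mul_iff]

theorem map_val_map_castHom (A : Matrix k l (ZMod p)) : (A.map 𝔩).map π = A := by
  ext i j
  exact castHom_natCast_val (A i j)

theorem exists_pow_smul_map_val_eq {X : Matrix k l (ZMod (p ^ (m + 1)))}
    (hX : X.map (castHom (pow_dvd_pow p (Nat.le_succ m)) (ZMod (p ^ m))) = 0) :
    ∃ A : Matrix k l (ZMod p), 𝔠 • A.map 𝔩 = X := by
  have hentry (i : k) (j : l) : ∃ y : ZMod (p ^ (m + 1)), X i j = 𝔠 * y := by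
    simpa using exists_eq_mul_of_castHom_eq_zero (pow_dvd_pow p (Nat.le_succ m))
      (congrFun (congrFun hX i) j)
  choose Y hY using hentry
  refine ⟨(Matrix.of Y).map π, ?_⟩
  calc 𝔠 • ((Matrix.of Y).map π).map 𝔩 = 𝔠 • Matrix.of Y := by
        rw [pow_smul_eq_pow_smul_iff, map_val_map_castHom]
    _ = X := by ext i j; exact (hY i j).symm

end ZMod

variable {G n : Type*} [Group G] [Fintype n] [DecidableEq n]

def IsLiftDifference (ρ ρ' : G → Matrix n n (ZMod (p ^ (m + 1)))) (h : G → Matrix n n (ZMod p)) :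
    Prop :=
  ∀ σ, ρ σ = (1 + 𝔠 • (h σ).map 𝔩) * ρ' σ

theorem exists_isLiftDifference [NeZero p] (ρ ρ' : G →* Matrix n n (ZMod (p ^ (m + 1))))
    (hred : ∀ σ, (ρ σ).map (ZMod.castHom (pow_dvd_pow p (Nat.le_succ m)) (ZMod (p ^ m)))
      = (ρ' σ).map (ZMod.castHom (pow_dvd_pow p (Nat.le_succ m)) (ZMod (p ^ m)))) :
    ∃ h, IsLiftDifference ρ ρ' h := by
  have hdiff (σ : G) : ∃ A : Matrix n n (ZMod p), 𝔠 • A.map 𝔩 = ρ σ * ρ' σ⁻¹ - 1 := by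
    refine ZMod.exists_pow_smul_map_val_eq ?_
    change RingHom.mapMatrix _ (ρ σ * ρ' σ⁻¹ - 1) = 0
    rw [map_sub, map_mul, map_one]
    exact sub_eq_zero.mpr ((congrArg (· * _) (hred σ)).trans
      (map_mul_eq_one (RingHom.mapMatrix _) (map_mul_eq_one ρ' (mul_inv_cancel σ))))
  choose h hh using hdiff
  refine ⟨h, fun σ => ?_⟩
  rw [hh, add_sub_cancel, mul_assoc, ← map_mul, inv_mul_cancel, map_one, mul_one]

namespace IsLiftDifference

variable {ρ' : G →* Matrix n n (ZMod (p ^ (m + 1)))} {h : G → Matrix n n (ZMod p)}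

theorem unique [NeZero p] {ρ : G → Matrix n n (ZMod (p ^ (m + 1)))}
    {h' : G → Matrix n n (ZMod p)} (hh : IsLiftDifference ρ ρ' h)
    (hh' : IsLiftDifference ρ ρ' h') : h = h' := by
  funext σ
  have hlift : 𝔠 • (h σ).map 𝔩 = 𝔠 • (h' σ).map 𝔩 := by
    simpa using ((Group.isUnit σ).map ρ').mul_left_inj.mp ((hh σ).symm.trans (hh' σ))
  rwa [ZMod.pow_smul_eq_pow_smul_iff, ZMod.map_val_map_castHom, ZMod.map_val_map_castHom] at hlift

theorem map_castHom_eq {ρ : G → Matrix n n (ZMod (p ^ (m + 1)))} (hm : 1 ≤ m)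
    (hh : IsLiftDifference ρ ρ' h) (σ : G) : (ρ σ).map π = (ρ' σ).map π := by
  ext i j
  simp [hh σ, add_mul, zero_pow (Nat.one_le_iff_ne_zero.mp hm)]

theorem transpose_mul_add_mul_eq_zero [NeZero p] {ρ : G → Matrix n n (ZMod (p ^ (m + 1)))}
    (hm : 1 ≤ m) (hh : IsLiftDifference ρ ρ' h) {J : Matrix n n (ZMod (p ^ (m + 1)))} {σ : G}
    (hJ : (ρ σ)ᵀ * J * ρ σ = (ρ' σ)ᵀ * J * ρ' σ) :
    (h σ)ᵀ * J.map π + J.map π * h σ = 0 := by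
  set X := (h σ).map 𝔩
  have hP : IsUnit (ρ' σ) := (Group.isUnit σ).map ρ'
  have hconj : (ρ' σ)ᵀ * (J + 𝔠 • (Xᵀ * J + J * X)) * ρ' σ = (ρ' σ)ᵀ * J * ρ' σ := by
    rw [← transpose_one_add_smul_mul_mul (ZMod.pow_mul_pow_eq_zero hm), ← hJ, hh σ, transpose_mul]
    simp only [mul_assoc, X]
  have hK : 𝔠 • (Xᵀ * J + J * X) = 𝔠 • 0 := by
    rwa [hP.mul_left_inj, ((ρ' σ).isUnit_transpose.mpr hP).mul_right_inj, add_eq_left,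
      ← smul_zero 𝔠] at hconj
  rw [ZMod.pow_smul_eq_pow_smul_iff] at hK
  change RingHom.mapMatrix π _ = RingHom.mapMatrix π 0 at hK
  simpa only [map_add, map_mul, map_zero, RingHom.mapMatrix_apply, ← transpose_map,
    ZMod.map_val_map_castHom, X] using hK

theorem apply_mul [NeZero p] {ρ : G →* Matrix n n (ZMod (p ^ (m + 1)))} (hm : 1 ≤ m)
    (hh : IsLiftDifference ρ ρ' h) (σ τ : G) :
    h (σ * τ) = h σ + (ρ σ).map π * h τ * ((ρ σ).map π)⁻¹ := by
  set X := fun υ => (h υ).map 𝔩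
  have key : 𝔠 • X (σ * τ) = 𝔠 • (X σ + ρ' σ * X τ * ρ' σ⁻¹) := by
    have hfactor := calc
      (1 + 𝔠 • X (σ * τ)) * ρ' (σ * τ) = ρ (σ * τ) := (hh _).symm
      _ = (1 + 𝔠 • X σ) * (ρ' σ * (1 + 𝔠 • X τ)) * ρ' τ := by
        rw [map_mul, hh σ, hh τ]
        simp only [mul_assoc, X]
      _ = (1 + 𝔠 • (X σ + ρ' σ * X τ * ρ' σ⁻¹)) * ρ' (σ * τ) := by
        rw [mul_one_add_smul_eq (map_mul_eq_one ρ' (inv_mul_cancel σ)), ← mul_assoc,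
          one_add_smul_mul_one_add_smul (ZMod.pow_mul_pow_eq_zero hm), map_mul, mul_assoc]
    exact add_left_cancel (((Group.isUnit _).map ρ').mul_left_inj.mp hfactor)
  rw [ZMod.pow_smul_eq_pow_smul_iff] at key
  change RingHom.mapMatrix π _ = RingHom.mapMatrix π _ at key
  simp only [map_add, _root_.map_mul, RingHom.mapMatrix_apply, ZMod.map_val_map_castHom, X] at key
  have hinv : ((ρ σ).map π)⁻¹ = (ρ σ⁻¹).map π :=
    inv_eq_right_inv <|
      map_mul_eq_one ((RingHom.mapMatrix π).toMonoidHom.comp ρ) (mul_inv_cancel σ)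
  rw [key, hinv, hh.map_castHom_eq hm, hh.map_castHom_eq hm]

end IsLiftDifference

end PrimePowerLift

/-- If `ρ, ρ' : G → GSp₄(ℤ/p^{m+1}ℤ)` are homomorphisms with the same reduction
mod `p^m` and the same similitude character, then there is a unique function
`h : G → sp₄(𝔽_p)` with `ρ(σ) = (1 + p^m·h̃(σ))·ρ'(σ)`, and any such `h` is a
1-cocycle for the adjoint action of the mod-`p` reduction `ρ̄` of `ρ`. -/
theorem difference_of_lifts_is_cocycle (p : ℕ) [Fact p.Prime] (m : ℕ) (hm : 1 ≤ m)
    (G : Type*) [Group G]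
    (ρ ρ' : G → Matrix (Fin 4) (Fin 4) (ZMod (p ^ (m + 1))))
    (hρone : ρ 1 = 1) (hρ'one : ρ' 1 = 1)
    (hρmul : ∀ σ τ : G, ρ (σ * τ) = ρ σ * ρ τ)
    (hρ'mul : ∀ σ τ : G, ρ' (σ * τ) = ρ' σ * ρ' τ)
    (hν : ∀ σ : G, ∃ u : (ZMod (p ^ (m + 1)))ˣ,
      (ρ σ)ᵀ * Jmat (ZMod (p ^ (m + 1))) * ρ σ
          = (u : ZMod (p ^ (m + 1))) • Jmat (ZMod (p ^ (m + 1))) ∧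
      (ρ' σ)ᵀ * Jmat (ZMod (p ^ (m + 1))) * ρ' σ
          = (u : ZMod (p ^ (m + 1))) • Jmat (ZMod (p ^ (m + 1))))
    (hred : ∀ σ : G,
      (ρ σ).map (ZMod.castHom (pow_dvd_pow p (by omega : m ≤ m + 1)) (ZMod (p ^ m)))
        = (ρ' σ).map (ZMod.castHom (pow_dvd_pow p (by omega : m ≤ m + 1)) (ZMod (p ^ m)))) :
    (∃! h : G → Matrix (Fin 4) (Fin 4) (ZMod p),
      (∀ σ : G, (h σ)ᵀ * Jmat (ZMod p) + Jmat (ZMod p) * h σ = 0) ∧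
      (∀ σ : G,
        ρ σ = (1 + ((p : ZMod (p ^ (m + 1))) ^ m) •
            (h σ).map (fun x => (x.val : ZMod (p ^ (m + 1))))) * ρ' σ)) ∧
    (∀ h : G → Matrix (Fin 4) (Fin 4) (ZMod p),
      ((∀ σ : G, (h σ)ᵀ * Jmat (ZMod p) + Jmat (ZMod p) * h σ = 0) ∧
       (∀ σ : G,
        ρ σ = (1 + ((p : ZMod (p ^ (m + 1))) ^ m) •
            (h σ).map (fun x => (x.val : ZMod (p ^ (m + 1))))) * ρ' σ)) →
      ∀ σ τ : G,
        h (σ * τ)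
          = h σ +
            (ρ σ).map (ZMod.castHom (dvd_pow_self p (by omega : m + 1 ≠ 0)) (ZMod p)) * h τ *
              ((ρ σ).map
                (ZMod.castHom (dvd_pow_self p (by omega : m + 1 ≠ 0)) (ZMod p)))⁻¹) := by
  let r : G →* Matrix (Fin 4) (Fin 4) (ZMod (p ^ (m + 1))) := ⟨⟨ρ, hρone⟩, hρmul⟩
  let r' : G →* Matrix (Fin 4) (Fin 4) (ZMod (p ^ (m + 1))) := ⟨⟨ρ', hρ'one⟩, hρ'mul⟩
  obtain ⟨h, hh⟩ := exists_isLiftDifference r r' hred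
  have hsp (σ : G) : (h σ)ᵀ * Jmat (ZMod p) + Jmat (ZMod p) * h σ = 0 := by
    obtain ⟨u, hu, hu'⟩ := hν σ
    simpa only [Jmat_map] using hh.transpose_mul_add_mul_eq_zero hm (hu.trans hu'.symm)
  exact ⟨⟨h, ⟨hsp, hh⟩, fun h' ⟨_, hh'⟩ => IsLiftDifference.unique (ρ' := r') hh' hh⟩,
    fun h' ⟨_, hh'⟩ => IsLiftDifference.apply_mul (ρ := r) (ρ' := r') hm hh'⟩
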